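/- arXiv:2208.06588 — 5 statements merged into one kernel-verified Lean document; each statement's English description precedes it below -/
import Mathlib

section
/- Let g, α, c, b⁻, b⁺ ∈ ℝ, let w = (w¹, w²) ∈ ℝ² and n = (n₁, n₂) ∈ ℝ², and set ω = w¹n₁ + w²n₂. Define the hydrostatic reconstruction at still-water data η⁻ = η⁺ = c, (hu)± = (hv)± = 0 by h* = max(0, c − max(b⁻, b⁺)), η*⁻ = h* + b⁻, η*⁺ = h* + b⁺, and the correction ϑ = ((ω + α)/2)(η*⁺ − c) + ((ω − α)/2)(η*⁻ − c). Then: (i) (1/2)(−ω·η*⁻ − ω·η*⁺) − (α/2)(η*⁺ − η*⁻) + ϑ = −ω·c; (ii) (1/2)((g/2)(h*)²·n₁ + (g/2)(h*)²·n₁) + ((g/2)(c − b⁻)² − (g/2)(h*)²)·n₁ = (g/2)(c − b⁻)²·n₁, and the same identity holds with n₂ in place of n₁. That is, at still-water data the modified Lax–Friedrichs flux of the hydrostatic-reconstruction scheme has components (−(w·n)c, (g/2)(c − b⁻)²n₁, (g/2)(c − b⁻)²n₂). -/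
/-- At still-water data `η⁻ = η⁺ = c`, `(hu)± = (hv)± = 0`, the modified
Lax–Friedrichs flux of the hydrostatic-reconstruction scheme has components
`(−(w·n)c, (g/2)(c−b⁻)²n₁, (g/2)(c−b⁻)²n₂)`. -/
theorem hydrostatic_flux_still_water (g α c bm bp w1 w2 n1 n2 : ℝ) :
    let ω := w1 * n1 + w2 * n2
    let hs := max 0 (c - max bm bp)
    let ηm := hs + bm
    let ηp := hs + bp
    let ϑ := (ω + α) / 2 * (ηp - c) + (ω - α) / 2 * (ηm - c)
    (1 / 2 * (-(ω * ηm) - ω * ηp) - α / 2 * (ηp - ηm) + ϑ = -(ω * c)) ∧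
    (1 / 2 * (g / 2 * hs ^ 2 * n1 + g / 2 * hs ^ 2 * n1)
        + (g / 2 * (c - bm) ^ 2 - g / 2 * hs ^ 2) * n1
      = g / 2 * (c - bm) ^ 2 * n1) ∧
    (1 / 2 * (g / 2 * hs ^ 2 * n2 + g / 2 * hs ^ 2 * n2)
        + (g / 2 * (c - bm) ^ 2 - g / 2 * hs ^ 2) * n2
      = g / 2 * (c - bm) ^ 2 * n2) := by
  refine ⟨by ring, by ring, by ring⟩
end

section
/- Let a < b be real numbers and let h : ℝ → ℝ be continuous on [a,b]. Let h̄ = (1/(b−a))·∫_a^b h(x)dx, let m = min_{x∈[a,b]} h(x), and suppose h̄ ≥ 0 and m < h̄. Set ε = min(10⁻¹¹, h̄), Φ = min(1, (h̄ − ε)/(h̄ − m)), and define the limited function h^new(x) = Φ·(h(x) − h̄) + h̄. Then: (i) 0 ≤ Φ ≤ 1; (ii) h^new(x) ≥ ε ≥ 0 for every x ∈ [a,b]; (iii) (1/(b−a))·∫_a^b h^new(x)dx = h̄, i.e. the limiter preserves the cell average. -/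
/-!
The rescaled function `Φ (y - h̄) + h̄` is monotone in `y` because `Φ ≥ 0`, so on the cell it is
smallest where `h` attains its minimum `m`. There `Φ ≤ (h̄ - ε) / (h̄ - m)` and `m - h̄ < 0` give
`Φ (m - h̄) + h̄ ≥ ε`. The cell average is untouched because the rescaling is affine and fixes `h̄`,
and the average of `h - h̄` vanishes.
-/

open intervalIntegral

noncomputable def limiterScale (hbar m ε : ℝ) : ℝ := min 1 ((hbar - ε) / (hbar - m))

section limiterScale

variable {hbar m ε : ℝ}

lemma limiterScale_le_one : limiterScale hbar m ε ≤ 1 := min_le_left _ _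

lemma limiterScale_nonneg (hm : m < hbar) (hε : ε ≤ hbar) : 0 ≤ limiterScale hbar m ε :=
  le_min zero_le_one (div_nonneg (by linarith) (by linarith))

lemma le_limiterScale_mul_sub_add (hm : m < hbar) (hε : ε ≤ hbar) {y : ℝ} (hy : m ≤ y) :
    ε ≤ limiterScale hbar m ε * (y - hbar) + hbar := by
  set Φ := limiterScale hbar m ε
  have hΦ_le : Φ ≤ (hbar - ε) / (hbar - m) := min_le_right _ _
  calc ε = (hbar - ε) / (hbar - m) * (m - hbar) + hbar := by
          field_simp [sub_ne_zero.mpr hm.ne']; ring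
    _ ≤ Φ * (m - hbar) + hbar := by
          gcongr ?_ + _; exact mul_le_mul_of_nonpos_right hΦ_le (by linarith)
    _ ≤ Φ * (y - hbar) + hbar := by gcongr; exact limiterScale_nonneg hm hε

end limiterScale

lemma average_mul_sub_add_of_average_eq {a b : ℝ} (hab : a ≠ b) {h : ℝ → ℝ}
    (hint : IntervalIntegrable h MeasureTheory.volume a b) {hbar : ℝ}
    (hbar_def : hbar = (1 / (b - a)) * ∫ x in a..b, h x) (c : ℝ) :
    (1 / (b - a)) * ∫ x in a..b, (c * (h x - hbar) + hbar) = hbar := by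
  have hba : b - a ≠ 0 := sub_ne_zero.mpr hab.symm
  have hI : ∫ x in a..b, h x = hbar * (b - a) := by rw [hbar_def]; field_simp
  rw [integral_add ((hint.sub intervalIntegrable_const).const_mul c) intervalIntegrable_const,
    integral_const_mul, integral_sub hint intervalIntegrable_const, integral_const, hI, smul_eq_mul]
  field_simp
  ring

/-- The Xing–Zhang positivity-preserving limiter: `0 ≤ Φ ≤ 1`, the limited
function is bounded below by `ε ≥ 0` on the cell, and the cell average is
preserved. -/
theorem positivity_limiter (a b : ℝ) (hab : a < b) (h : ℝ → ℝ)
    (hcont : ContinuousOn h (Set.Icc a b))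
    (hbar m ε Φ : ℝ)
    (hbar_def : hbar = (1 / (b - a)) * ∫ x in a..b, h x)
    (m_def : m = sInf (h '' Set.Icc a b))
    (hbar_nonneg : 0 ≤ hbar) (hm_lt : m < hbar)
    (ε_def : ε = min (1e-11) hbar)
    (Φ_def : Φ = min 1 ((hbar - ε) / (hbar - m))) :
    (0 ≤ Φ ∧ Φ ≤ 1) ∧
    (∀ x ∈ Set.Icc a b, ε ≤ Φ * (h x - hbar) + hbar) ∧ (0 ≤ ε) ∧
    ((1 / (b - a)) * ∫ x in a..b, (Φ * (h x - hbar) + hbar) = hbar) := by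
  have hε_le : ε ≤ hbar := ε_def ▸ min_le_right _ _
  have hε_nonneg : 0 ≤ ε := ε_def ▸ le_min (by norm_num) hbar_nonneg
  have hΦ : Φ = limiterScale hbar m ε := Φ_def
  have hint : IntervalIntegrable h MeasureTheory.volume a b :=
    hcont.intervalIntegrable_of_Icc hab.le
  subst hΦ
  refine ⟨⟨limiterScale_nonneg hm_lt hε_le, limiterScale_le_one⟩, fun x hx => ?_, hε_nonneg,
    average_mul_sub_add_of_average_eq hab.ne hint hbar_def _⟩
  exact le_limiterScale_mul_sub_add hm_lt hε_le (m_def ▸ hcont.sInf_image_Icc_le hx)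
end

section
/- Consider the first-order ALE Lax–Friedrichs update for the water height on a moving one-dimensional mesh. Let h, u : ℤ → ℝ be the cell heights and velocities, w : ℤ → ℝ the interface speeds (w_j is the speed of the interface between cells j and j+1), Δ : ℤ → ℝ the cell lengths with Δ_j > 0, let Δt ≥ 0 and α ≥ 0, and set Δ'_j = Δ_j + Δt·(w_j − w_{j−1}), assumed positive for all j. Define the numerical flux F_j = (1/2)[h_j(u_j − w_j) + h_{j+1}(u_{j+1} − w_j)] − (α/2)(h_{j+1} − h_j) and the update h'_j = (Δ_j·h_j − Δt·(F_j − F_{j−1}))/Δ'_j. Assume for every j: h_j ≥ 0, |u_j − w_j| ≤ α, |u_j − w_{j−1}| ≤ α, and the CFL condition Δt·α ≤ (Δ_j + Δ'_j)/2. Then h'_j ≥ 0 for every j. -/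
/-- Positivity of the first-order ALE Lax–Friedrichs update for the water
height on a moving one-dimensional mesh, under the CFL condition
`Δt·α ≤ (Δⱼ + Δ'ⱼ)/2`. -/
theorem ale_lax_friedrichs_positivity
    (h u w Δ : ℤ → ℝ) (Δt α : ℝ)
    (hΔ : ∀ j, 0 < Δ j) (hΔt : 0 ≤ Δt) (hα : 0 ≤ α)
    (Δ' : ℤ → ℝ) (hΔ'def : ∀ j, Δ' j = Δ j + Δt * (w j - w (j - 1)))
    (hΔ'pos : ∀ j, 0 < Δ' j)
    (F : ℤ → ℝ)
    (hF : ∀ j, F j = 1 / 2 * (h j * (u j - w j) + h (j + 1) * (u (j + 1) - w j))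
      - α / 2 * (h (j + 1) - h j))
    (hpos : ∀ j, 0 ≤ h j)
    (hb1 : ∀ j, |u j - w j| ≤ α)
    (hb2 : ∀ j, |u j - w (j - 1)| ≤ α)
    (hCFL : ∀ j, Δt * α ≤ (Δ j + Δ' j) / 2) :
    ∀ j, 0 ≤ (Δ j * h j - Δt * (F j - F (j - 1))) / Δ' j := by
  intro j
  apply div_nonneg _ (hΔ'pos j).le
  have e1 : j - 1 + 1 = j := by ring
  have e2 : j + 1 - 1 = j := by ring
  have b1 := abs_le.1 (hb1 (j - 1))
  have b2 := abs_le.1 (hb2 (j + 1))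
  rw [e2] at b2
  have hc := hCFL j
  rw [hΔ'def j] at hc
  have k1 : 0 ≤ Δt * (α - (u (j + 1) - w j)) * h (j + 1) :=
    mul_nonneg (mul_nonneg hΔt (by linarith [b2.2])) (hpos (j + 1))
  have k2 : 0 ≤ Δt * (α + (u (j - 1) - w (j - 1))) * h (j - 1) :=
    mul_nonneg (mul_nonneg hΔt (by linarith [b1.1])) (hpos (j - 1))
  have k3 : 0 ≤ ((Δ j + (Δ j + Δt * (w j - w (j - 1)))) / 2 - Δt * α) * h j :=
    mul_nonneg (by linarith) (hpos j)
  rw [hF j, hF (j - 1), e1]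
  nlinarith [k1, k2, k3]
end

section
/- Let g > 0, h₀ > 0, a > 0, and A ∈ (0,1) be real numbers and set κ = √(8·g·h₀)/a. Define, for (x,y,t) ∈ ℝ³, P(t) = 1 − A·cos(κt), b(x,y) = (h₀/a²)(x² + y²), H(x,y,t) = h₀·(√(1−A²)/P(t) − ((x² + y²)/a²)·(1−A²)/P(t)²), U(x,y,t) = (κ·A·sin(κt)/(2·P(t)))·x, and V(x,y,t) = (κ·A·sin(κt)/(2·P(t)))·y. Then at every point (x,y,t) with H(x,y,t) > 0, the triple (H, U, V) satisfies the two-dimensional shallow water equations: ∂_t H + ∂_x(HU) + ∂_y(HV) = 0, ∂_t(HU) + ∂_x(HU² + (g/2)H²) + ∂_y(HUV) = −g·H·∂_x b, and ∂_t(HV) + ∂_x(HUV) + ∂_y(HV² + (g/2)H²) = −g·H·∂_y b. -/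
/-!
The velocity field is linear, `(U, V) = w(t) • (x, y)` with `w = P' / (2 P)`. For such a field the
mass equation reduces to `H_t + w (2 H + x H_x + y H_y) = 0`, which holds for every height of the
form `α / P - β r² / P²`; granted mass conservation, the `x`-momentum equation reduces to
`x (w' + w²) + g ∂ₓ(H + b) = 0`, and symmetrically in `y`. Here `∂ₓ(H + b) = 2 (h0 / a²) (1 - (1 - A²) / P²) x`,
while `P = 1 - A cos κt` satisfies the Riccati identity `w' + w² = (κ² / 4) ((1 - A²) / P² - 1)`;
the two cancel because `κ² = 8 g h0 / a²`.
-/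

open Real

section RadialFlow

variable {H : ℝ → ℝ → ℝ → ℝ} {w : ℝ → ℝ} {x y t Ht Hx Hy : ℝ}

theorem shallowWater_mass_of_radial
    (hHt : HasDerivAt (fun s => H x y s) Ht t)
    (hHx : HasDerivAt (fun s => H s y t) Hx x)
    (hHy : HasDerivAt (fun s => H x s t) Hy y)
    (hmass : Ht + w t * (2 * H x y t + x * Hx + y * Hy) = 0) :
    deriv (fun s => H x y s) t + deriv (fun s => H s y t * (w t * s)) x
        + deriv (fun s => H x s t * (w t * s)) y = 0 := by
  rw [hHt.deriv, (hHx.fun_mul ((hasDerivAt_id' x).const_mul (w t))).deriv,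
    (hHy.fun_mul ((hasDerivAt_id' y).const_mul (w t))).deriv, ← hmass]
  ring

theorem shallowWater_momentum_x_of_radial {b : ℝ → ℝ → ℝ} {g w' bx : ℝ}
    (hw : HasDerivAt w w' t)
    (hHt : HasDerivAt (fun s => H x y s) Ht t)
    (hHx : HasDerivAt (fun s => H s y t) Hx x)
    (hHy : HasDerivAt (fun s => H x s t) Hy y)
    (hbx : HasDerivAt (fun s => b s y) bx x)
    (hmass : Ht + w t * (2 * H x y t + x * Hx + y * Hy) = 0)
    (hbal : x * (w' + w t ^ 2) + g * (Hx + bx) = 0) :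
    deriv (fun s => H x y s * (w s * x)) t
        + deriv (fun s => H s y t * (w t * s) ^ 2 + g / 2 * H s y t ^ 2) x
        + deriv (fun s => H x s t * (w t * x) * (w t * s)) y
      = -(g * H x y t * deriv (fun s => b s y) x) := by
  rw [(hHt.fun_mul (hw.mul_const x)).deriv,
    ((hHx.fun_mul (((hasDerivAt_id' x).const_mul (w t)).fun_pow 2)).fun_add
      ((hHx.fun_pow 2).const_mul (g / 2))).deriv,
    ((hHy.mul_const (w t * x)).fun_mul ((hasDerivAt_id' y).const_mul (w t))).deriv, hbx.deriv]
  linear_combination (x * w t) * hmass + H x y t * hbal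

theorem shallowWater_momentum_y_of_radial {b : ℝ → ℝ → ℝ} {g w' by' : ℝ}
    (hw : HasDerivAt w w' t)
    (hHt : HasDerivAt (fun s => H x y s) Ht t)
    (hHx : HasDerivAt (fun s => H s y t) Hx x)
    (hHy : HasDerivAt (fun s => H x s t) Hy y)
    (hby : HasDerivAt (fun s => b x s) by' y)
    (hmass : Ht + w t * (2 * H x y t + x * Hx + y * Hy) = 0)
    (hbal : y * (w' + w t ^ 2) + g * (Hy + by') = 0) :
    deriv (fun s => H x y s * (w s * y)) t
        + deriv (fun s => H s y t * (w t * s) * (w t * y)) x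
        + deriv (fun s => H x s t * (w t * s) ^ 2 + g / 2 * H x s t ^ 2) y
      = -(g * H x y t * deriv (fun s => b x s) y) := by
  rw [(hHt.fun_mul (hw.mul_const y)).deriv,
    ((hHx.fun_mul ((hasDerivAt_id' x).const_mul (w t))).mul_const (w t * y)).deriv,
    ((hHy.fun_mul (((hasDerivAt_id' y).const_mul (w t)).fun_pow 2)).fun_add
      ((hHy.fun_pow 2).const_mul (g / 2))).deriv, hby.deriv]
  linear_combination (y * w t) * hmass + H x y t * hbal

end RadialFlow

noncomputable def paraboloidHeight (P : ℝ → ℝ) (α β x y t : ℝ) : ℝ :=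
  α / P t - β * (x ^ 2 + y ^ 2) / P t ^ 2

section ParaboloidHeight

variable {P : ℝ → ℝ} {α β x y t P' : ℝ}

theorem hasDerivAt_paraboloidHeight_x :
    HasDerivAt (fun s => paraboloidHeight P α β s y t) (-(2 * β * x) / P t ^ 2) x :=
  ((((hasDerivAt_pow 2 x).add_const (y ^ 2)).const_mul β).div_const (P t ^ 2)).const_sub
    (α / P t) |>.congr_deriv (by ring)

theorem hasDerivAt_paraboloidHeight_y :
    HasDerivAt (fun s => paraboloidHeight P α β x s t) (-(2 * β * y) / P t ^ 2) y :=
  ((((hasDerivAt_pow 2 y).const_add (x ^ 2)).const_mul β).div_const (P t ^ 2)).const_sub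
    (α / P t) |>.congr_deriv (by ring)

theorem hasDerivAt_paraboloidHeight_t (hP : HasDerivAt P P' t) (hP0 : P t ≠ 0) :
    HasDerivAt (fun s => paraboloidHeight P α β x y s)
      ((-α / P t ^ 2 + 2 * β * (x ^ 2 + y ^ 2) / P t ^ 3) * P') t := by
  refine ((hasDerivAt_const t α).fun_div hP hP0).fun_sub
    ((hasDerivAt_const t (β * (x ^ 2 + y ^ 2))).fun_div (hP.fun_pow 2) (pow_ne_zero 2 hP0))
    |>.congr_deriv ?_
  field_simp
  ring

theorem paraboloidHeight_mass (hP0 : P t ≠ 0) :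
    (-α / P t ^ 2 + 2 * β * (x ^ 2 + y ^ 2) / P t ^ 3) * P'
      + P' / (2 * P t) * (2 * paraboloidHeight P α β x y t
        + x * (-(2 * β * x) / P t ^ 2) + y * (-(2 * β * y) / P t ^ 2)) = 0 := by
  unfold paraboloidHeight
  field_simp
  ring

end ParaboloidHeight

noncomputable def oscillationFactor (A κ t : ℝ) : ℝ := 1 - A * cos (κ * t)

noncomputable def radialRate (A κ t : ℝ) : ℝ :=
  κ * A * sin (κ * t) / (2 * oscillationFactor A κ t)

section Oscillation

variable {A κ t : ℝ}

theorem oscillationFactor_pos (hA : |A| < 1) : 0 < oscillationFactor A κ t := by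
  have : A * cos (κ * t) < 1 := calc
    A * cos (κ * t) ≤ |A| * |cos (κ * t)| := (le_abs_self _).trans (abs_mul _ _).le
    _ ≤ |A| := mul_le_of_le_one_right (abs_nonneg A) (abs_cos_le_one _)
    _ < 1 := hA
  unfold oscillationFactor
  linarith

theorem hasDerivAt_oscillationFactor :
    HasDerivAt (oscillationFactor A κ) (κ * A * sin (κ * t)) t :=
  (((hasDerivAt_id' t).const_mul κ).cos.const_mul A).const_sub 1 |>.congr_deriv (by ring)

theorem hasDerivAt_radialRate (hP0 : oscillationFactor A κ t ≠ 0) :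
    HasDerivAt (radialRate A κ)
      (κ ^ 2 / 4 * ((1 - A ^ 2) / oscillationFactor A κ t ^ 2 - 1) - radialRate A κ t ^ 2) t := by
  refine (((hasDerivAt_id' t).const_mul κ).sin.const_mul (κ * A)).div
    (hasDerivAt_oscillationFactor.const_mul 2) (mul_ne_zero two_ne_zero hP0) |>.congr_deriv ?_
  unfold radialRate oscillationFactor at *
  field_simp
  rw [sin_sq]
  ring

end Oscillation

theorem parabolic_basin_exact_solution_general
    (g h0 a A : ℝ) (hg : 0 < g) (hh0 : 0 < h0)
    (hA : A ∈ Set.Ioo (0 : ℝ) 1)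
    (κ : ℝ) (hκ : κ = Real.sqrt (8 * g * h0) / a)
    (P : ℝ → ℝ) (hP : ∀ t, P t = 1 - A * Real.cos (κ * t))
    (b : ℝ → ℝ → ℝ) (hb : ∀ x y, b x y = h0 / a ^ 2 * (x ^ 2 + y ^ 2))
    (H U V : ℝ → ℝ → ℝ → ℝ)
    (hH : ∀ x y t, H x y t
      = h0 * (Real.sqrt (1 - A ^ 2) / P t
          - (x ^ 2 + y ^ 2) / a ^ 2 * (1 - A ^ 2) / (P t) ^ 2))
    (hU : ∀ x y t, U x y t = κ * A * Real.sin (κ * t) / (2 * P t) * x)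
    (hV : ∀ x y t, V x y t = κ * A * Real.sin (κ * t) / (2 * P t) * y) :
    ∀ x y t : ℝ, 0 < H x y t →
      (deriv (fun s => H x y s) t
          + deriv (fun s => H s y t * U s y t) x
          + deriv (fun s => H x s t * V x s t) y = 0) ∧
      (deriv (fun s => H x y s * U x y s) t
          + deriv (fun s => H s y t * (U s y t) ^ 2 + g / 2 * (H s y t) ^ 2) x
          + deriv (fun s => H x s t * U x s t * V x s t) y
        = -(g * H x y t * deriv (fun s => b s y) x)) ∧
      (deriv (fun s => H x y s * V x y s) t
          + deriv (fun s => H s y t * U s y t * V s y t) x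
          + deriv (fun s => H x s t * (V x s t) ^ 2 + g / 2 * (H x s t) ^ 2) y
        = -(g * H x y t * deriv (fun s => b x s) y)) := by
  obtain rfl : P = oscillationFactor A κ := funext hP
  obtain rfl : H = paraboloidHeight (oscillationFactor A κ) (h0 * √(1 - A ^ 2))
      (h0 * (1 - A ^ 2) / a ^ 2) := by
    funext x y t
    rw [hH, paraboloidHeight]
    ring
  obtain rfl : U = fun x _ t => radialRate A κ t * x := funext₃ hU
  obtain rfl : V = fun _ y t => radialRate A κ t * y := funext₃ hV
  intro x y t _
  have hP0 : oscillationFactor A κ t ≠ 0 :=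
    (oscillationFactor_pos (abs_lt.mpr ⟨by linarith [hA.1], hA.2⟩)).ne'
  have hκ2 : κ ^ 2 = 8 * g * h0 / a ^ 2 := by rw [hκ, div_pow, sq_sqrt (by positivity)]
  have hbx : HasDerivAt (fun s => b s y) (h0 / a ^ 2 * (2 * x)) x := by
    simpa [hb] using ((hasDerivAt_pow 2 x).add_const (y ^ 2)).const_mul (h0 / a ^ 2)
  have hby : HasDerivAt (fun s => b x s) (h0 / a ^ 2 * (2 * y)) y := by
    simpa [hb] using ((hasDerivAt_pow 2 y).const_add (x ^ 2)).const_mul (h0 / a ^ 2)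
  have hHt := hasDerivAt_paraboloidHeight_t (α := h0 * √(1 - A ^ 2))
    (β := h0 * (1 - A ^ 2) / a ^ 2) (x := x) (y := y) hasDerivAt_oscillationFactor hP0
  have hmass := paraboloidHeight_mass (α := h0 * √(1 - A ^ 2))
    (β := h0 * (1 - A ^ 2) / a ^ 2) (x := x) (y := y) (P' := κ * A * sin (κ * t)) hP0
  exact ⟨shallowWater_mass_of_radial hHt hasDerivAt_paraboloidHeight_x
      hasDerivAt_paraboloidHeight_y hmass,
    shallowWater_momentum_x_of_radial (hasDerivAt_radialRate hP0) hHt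
      hasDerivAt_paraboloidHeight_x hasDerivAt_paraboloidHeight_y hbx hmass
      (by rw [hκ2]; ring),
    shallowWater_momentum_y_of_radial (hasDerivAt_radialRate hP0) hHt
      hasDerivAt_paraboloidHeight_x hasDerivAt_paraboloidHeight_y hby hmass
      (by rw [hκ2]; ring)⟩

/-- The Thacker-type analytic solution of long wave resonance in a parabolic
basin satisfies the two-dimensional shallow water equations at every point
where the water height is positive. -/
theorem parabolic_basin_exact_solution
    (g h0 a A : ℝ) (hg : 0 < g) (hh0 : 0 < h0) (ha : 0 < a)
    (hA : A ∈ Set.Ioo (0 : ℝ) 1)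
    (κ : ℝ) (hκ : κ = Real.sqrt (8 * g * h0) / a)
    (P : ℝ → ℝ) (hP : ∀ t, P t = 1 - A * Real.cos (κ * t))
    (b : ℝ → ℝ → ℝ) (hb : ∀ x y, b x y = h0 / a ^ 2 * (x ^ 2 + y ^ 2))
    (H U V : ℝ → ℝ → ℝ → ℝ)
    (hH : ∀ x y t, H x y t
      = h0 * (Real.sqrt (1 - A ^ 2) / P t
          - (x ^ 2 + y ^ 2) / a ^ 2 * (1 - A ^ 2) / (P t) ^ 2))
    (hU : ∀ x y t, U x y t = κ * A * Real.sin (κ * t) / (2 * P t) * x)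
    (hV : ∀ x y t, V x y t = κ * A * Real.sin (κ * t) / (2 * P t) * y) :
    ∀ x y t : ℝ, 0 < H x y t →
      (deriv (fun s => H x y s) t
          + deriv (fun s => H s y t * U s y t) x
          + deriv (fun s => H x s t * V x s t) y = 0) ∧
      (deriv (fun s => H x y s * U x y s) t
          + deriv (fun s => H s y t * (U s y t) ^ 2 + g / 2 * (H s y t) ^ 2) x
          + deriv (fun s => H x s t * U x s t * V x s t) y
        = -(g * H x y t * deriv (fun s => b s y) x)) ∧
      (deriv (fun s => H x y s * V x y s) t
          + deriv (fun s => H s y t * U s y t * V s y t) x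
          + deriv (fun s => H x s t * (V x s t) ^ 2 + g / 2 * (H x s t) ^ 2) y
        = -(g * H x y t * deriv (fun s => b x s) y)) :=
  parabolic_basin_exact_solution_general g h0 a A hg hh0 hA κ hκ P hP b hb H U V hH hU hV
end

section
/- Consider the first-order fully discrete hydrostatic-reconstruction ALE scheme for the surface level on a moving one-dimensional mesh at a still-water state. Let c ∈ ℝ, α ∈ ℝ, let b : ℤ → ℝ be cell bottom values, w : ℤ → ℝ interface speeds, Δ : ℤ → ℝ cell lengths, Δt ∈ ℝ, and set Δ'_j = Δ_j + Δt·(w_j − w_{j−1}), assumed nonzero for all j. At the interface between cells j and j+1 define h*_j = max(0, c − max(b_j, b_{j+1})), η*⁻_j = h*_j + b_j, η*⁺_j = h*_j + b_{j+1}, ϑ_j = ((w_j + α)/2)·(η*⁺_j − c) + ((w_j − α)/2)·(η*⁻_j − c), and the modified flux Ĥ_j = (1/2)·(−w_j·η*⁻_j − w_j·η*⁺_j) − (α/2)·(η*⁺_j − η*⁻_j) + ϑ_j. Then the update η'_j = (Δ_j·c − Δt·(Ĥ_j − Ĥ_{j−1}))/Δ'_j satisfies η'_j = c for all j: the still-water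 surface level is preserved exactly on the moving mesh. -/
/-- Well-balancedness of the first-order fully discrete
hydrostatic-reconstruction ALE scheme: the still-water surface level `η ≡ c`
is preserved exactly on the moving mesh. -/
theorem hydrostatic_ale_well_balanced (c α : ℝ) (b w Δ : ℤ → ℝ) (Δt : ℝ)
    (Δ' : ℤ → ℝ) (hΔ'def : ∀ j, Δ' j = Δ j + Δt * (w j - w (j - 1)))
    (hΔ' : ∀ j, Δ' j ≠ 0)
    (hs ηm ηp ϑ Hhat : ℤ → ℝ)
    (hhs : ∀ j, hs j = max 0 (c - max (b j) (b (j + 1))))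
    (hηm : ∀ j, ηm j = hs j + b j)
    (hηp : ∀ j, ηp j = hs j + b (j + 1))
    (hϑ : ∀ j, ϑ j = (w j + α) / 2 * (ηp j - c) + (w j - α) / 2 * (ηm j - c))
    (hHhat : ∀ j, Hhat j = 1 / 2 * (-(w j * ηm j) - w j * ηp j)
      - α / 2 * (ηp j - ηm j) + ϑ j) :
    ∀ j, (Δ j * c - Δt * (Hhat j - Hhat (j - 1))) / Δ' j = c := by
  have h1 : ∀ k, Hhat k = -(w k * c) := by
    intro k; rw [hHhat, hϑ]; ring
  intro j
  rw [div_eq_iff (hΔ' j), h1, h1, hΔ'def]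
  ring
end
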